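/- arXiv:math/0102014 — 3 statements merged into one kernel-verified Lean document; each statement's English description precedes it below -/
import Mathlib

section
/- No filiform Lie algebra is a product by generators. -/
open Module

noncomputable section

/-- Direct sum (product) of two Lie rings. -/
instance prodLieRing (L L' : Type*) [LieRing L] [LieRing L'] : LieRing (L × L') where
  bracket p q := (⁅p.1, q.1⁆, ⁅p.2, q.2⁆)
  add_lie x y z := Prod.ext (add_lie x.1 y.1 z.1) (add_lie x.2 y.2 z.2)
  lie_add x y z := Prod.ext (lie_add x.1 y.1 z.1) (lie_add x.2 y.2 z.2)
  lie_self x := Prod.ext (lie_self x.1) (lie_self x.2)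
  leibniz_lie x y z := Prod.ext (leibniz_lie x.1 y.1 z.1) (leibniz_lie x.2 y.2 z.2)

instance prodLieAlgebra (R L L' : Type*) [CommRing R] [LieRing L] [LieRing L']
    [LieAlgebra R L] [LieAlgebra R L'] : LieAlgebra R (L × L') where
  lie_smul t x y := Prod.ext (lie_smul t x.1 y.1) (lie_smul t x.2 y.2)

/-- A Lie algebra is nonsplit if it is not the direct sum of two nonzero ideals. -/
def LieAlgebra.Nonsplit (R L : Type*) [CommRing R] [LieRing L] [LieAlgebra R L] : Prop :=
  ¬ ∃ I J : LieIdeal R L, I ≠ ⊥ ∧ J ≠ ⊥ ∧ I ⊓ J = ⊥ ∧ I ⊔ J = ⊤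

/-- `g` is nonabelian: some bracket is nonzero. -/
def LieAlgebra.Nonabelian (L : Type*) [LieRing L] : Prop := ∃ x y : L, ⁅x, y⁆ ≠ 0

/-- `L` is the product by generators `g1 ×̲ g2`: the central extension of `g1 ⊕ g2`
by `ℂ^(n1 n2)` given by the cocycle pairing the generators of `g1` with those of `g2`. -/
structure IsProductByGenerators
    (L g1 g2 : Type*) [LieRing L] [LieAlgebra ℂ L]
    [LieRing g1] [LieAlgebra ℂ g1] [LieRing g2] [LieAlgebra ℂ g2] where
  m1 : ℕ
  m2 : ℕ
  n1 : ℕ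
  n2 : ℕ
  two_le_n1 : 2 ≤ n1
  two_le_n2 : 2 ≤ n2
  n1_le : n1 ≤ m1
  n2_le : n2 ≤ m2
  /-- an adapted basis of `g1` -/
  b1 : Basis (Fin m1) ℂ g1
  /-- an adapted basis of `g2` -/
  b2 : Basis (Fin m2) ℂ g2
  /-- the first `n1` basis vectors generate `g1` -/
  gen1 : Submodule.span ℂ (⇑b1 '' {i : Fin m1 | (i : ℕ) < n1}) ⊔
      (LieAlgebra.derivedSeries ℂ g1 1).toSubmodule = ⊤
  gen2 : Submodule.span ℂ (⇑b2 '' {i : Fin m2 | (i : ℕ) < n2}) ⊔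
      (LieAlgebra.derivedSeries ℂ g2 1).toSubmodule = ⊤
  /-- the remaining basis vectors span the derived subalgebra -/
  adapted1 : (LieAlgebra.derivedSeries ℂ g1 1).toSubmodule ≤
      Submodule.span ℂ (⇑b1 '' {i : Fin m1 | n1 ≤ (i : ℕ)})
  adapted2 : (LieAlgebra.derivedSeries ℂ g2 1).toSubmodule ≤
      Submodule.span ℂ (⇑b2 '' {i : Fin m2 | n2 ≤ (i : ℕ)})
  /-- the cocycle, as a bilinear map `g1 × g2 → ℂ^(n1 n2)` -/
  Φ : g1 →ₗ[ℂ] g2 →ₗ[ℂ] (Fin n1 → Fin n2 → ℂ)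
  hΦ : ∀ i j, Φ (b1 i) (b2 j) =
      if h : (i : ℕ) < n1 ∧ (j : ℕ) < n2 then
        Pi.single (⟨i, h.1⟩ : Fin n1) (Pi.single (⟨j, h.2⟩ : Fin n2) (1 : ℂ)) else 0
  /-- the underlying linear identification of `L` with `g1 ⊕ g2 ⊕ ℂ^(n1 n2)` -/
  e : (g1 × g2 × (Fin n1 → Fin n2 → ℂ)) ≃ₗ[ℂ] L
  bracket_eq : ∀ a a' : g1 × g2 × (Fin n1 → Fin n2 → ℂ),
      ⁅e a, e a'⁆ = e (⁅a.1, a'.1⁆, ⁅a.2.1, a'.2.1⁆, Φ a.1 a'.2.1 - Φ a'.1 a.2.1)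

namespace IsProductByGenerators

variable {L g1 g2 : Type*} [LieRing L] [LieAlgebra ℂ L]
  [LieRing g1] [LieAlgebra ℂ g1] [LieRing g2] [LieAlgebra ℂ g2]
  (P : IsProductByGenerators L g1 g2)

/-- inclusion of `g1` -/
def ι₁ (x : g1) : L := P.e (x, 0, 0)
/-- inclusion of `g2` -/
def ι₂ (y : g2) : L := P.e (0, y, 0)
/-- inclusion of the adjoined center `g3 = ℂ^(n1 n2)` -/
def ι₃ (v : Fin P.n1 → Fin P.n2 → ℂ) : L := P.e (0, 0, v)
/-- projection onto `g1` -/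
def p₁ (z : L) : g1 := (P.e.symm z).1
/-- projection onto `g2` -/
def p₂ (z : L) : g2 := (P.e.symm z).2.1
/-- projection onto `g3` -/
def p₃ (z : L) : Fin P.n1 → Fin P.n2 → ℂ := (P.e.symm z).2.2

/-- the component `Dᵢⱼ = pᵢ ∘ D ∘ ιⱼ` of an endomorphism of the product. -/
def D11 (D : L →ₗ[ℂ] L) (x : g1) : g1 := P.p₁ (D (P.ι₁ x))
def D21 (D : L →ₗ[ℂ] L) (x : g1) : g2 := P.p₂ (D (P.ι₁ x))
def D31 (D : L →ₗ[ℂ] L) (x : g1) : Fin P.n1 → Fin P.n2 → ℂ := P.p₃ (D (P.ι₁ x))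
def D12 (D : L →ₗ[ℂ] L) (y : g2) : g1 := P.p₁ (D (P.ι₂ y))
def D22 (D : L →ₗ[ℂ] L) (y : g2) : g2 := P.p₂ (D (P.ι₂ y))
def D32 (D : L →ₗ[ℂ] L) (y : g2) : Fin P.n1 → Fin P.n2 → ℂ := P.p₃ (D (P.ι₂ y))
def D13 (D : L →ₗ[ℂ] L) (v : Fin P.n1 → Fin P.n2 → ℂ) : g1 := P.p₁ (D (P.ι₃ v))
def D23 (D : L →ₗ[ℂ] L) (v : Fin P.n1 → Fin P.n2 → ℂ) : g2 := P.p₂ (D (P.ι₃ v))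
def D33 (D : L →ₗ[ℂ] L) (v : Fin P.n1 → Fin P.n2 → ℂ) : Fin P.n1 → Fin P.n2 → ℂ :=
  P.p₃ (D (P.ι₃ v))

end IsProductByGenerators

/-- `IsDerivation D`: `D` satisfies the Leibniz rule. -/
def IsDerivation {L : Type*} [LieRing L] [LieAlgebra ℂ L] (D : L →ₗ[ℂ] L) : Prop :=
  ∀ x y : L, D ⁅x, y⁆ = ⁅D x, y⁆ + ⁅x, D y⁆

/-- the descending sequence `g^{[k]}`, with `g^{[1]} = Der(g)(g)`,
`g^{[k+1]} = Der(g)(g^{[k]})`. -/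
def derPow (g : Type*) [LieRing g] [LieAlgebra ℂ g] : ℕ → Submodule ℂ g
  | 0 => ⊤
  | k + 1 => Submodule.span ℂ
      {x | ∃ D : g →ₗ[ℂ] g, IsDerivation D ∧ ∃ y ∈ derPow g k, x = D y}

/-- characteristically nilpotent: `g^{[m]} = 0` for some `m`. -/
def CharacteristicallyNilpotent (g : Type*) [LieRing g] [LieAlgebra ℂ g] : Prop :=
  ∃ m, 1 ≤ m ∧ derPow g m = ⊥

/-- An S-algebra: for any Lie algebra `g2` and any derivation `D` of `g1 ×̲ g2`,
the component `D₂₁ = p₂ ∘ D ∘ p₁` maps `g1` into `[g2, g2]`. -/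
def IsSAlgebra (g1 : Type) [LieRing g1] [LieAlgebra ℂ g1] : Prop :=
  ∀ (g2 L : Type) (_ : LieRing g2) (_ : LieAlgebra ℂ g2) (_ : LieRing L)
    (_ : LieAlgebra ℂ L) (P : IsProductByGenerators L g1 g2) (D : L →ₗ[ℂ] L),
    IsDerivation D → ∀ x : g1, P.D21 D x ∈ LieAlgebra.derivedSeries ℂ g2 1

/-- nilpotency index: smallest `k` with `C^k g = 0` (`C¹g = [g,g]`). -/
noncomputable def nilindex (g : Type*) [LieRing g] [LieAlgebra ℂ g] : ℕ :=
  sInf {k | LieModule.lowerCentralSeries ℂ g g k = ⊥}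

/-- dimension as complex vector space -/
def fdim (g : Type*) [LieRing g] [LieAlgebra ℂ g] : ℕ := finrank ℂ g

/-- dimension of the center -/
def zdim (g : Type*) [LieRing g] [LieAlgebra ℂ g] : ℕ :=
  finrank ℂ (LieAlgebra.center ℂ g).toSubmodule

/-- dimension of the derived subalgebra `C¹g = [g,g]` -/
def ddim (g : Type*) [LieRing g] [LieAlgebra ℂ g] : ℕ :=
  finrank ℂ (LieAlgebra.derivedSeries ℂ g 1).toSubmodule

/-- minimal number of generators of a nilpotent Lie algebra: `dim g/[g,g]` -/
def gdim (g : Type*) [LieRing g] [LieAlgebra ℂ g] : ℕ :=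
  finrank ℂ (g ⧸ (LieAlgebra.derivedSeries ℂ g 1).toSubmodule)

def FinDim (g : Type*) [LieRing g] [LieAlgebra ℂ g] : Prop := FiniteDimensional ℂ g

/-- existence of a Lie algebra isomorphism -/
def LieIso (L L' : Type*) [LieRing L] [LieAlgebra ℂ L] [LieRing L'] [LieAlgebra ℂ L'] : Prop :=
  Nonempty (L ≃ₗ⁅ℂ⁆ L')

/-! In a nilpotent Lie algebra the lower central series strictly decreases until it vanishes, so
`dim [g, g] ≥ nilindex g - 1`; for a filiform `g` this gives `dim g / [g, g] ≤ 2`. In a product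
by generators `h₁ ×̲ h₂`, the projection onto `h₁/[h₁, h₁] × h₂/[h₂, h₂]` is surjective and kills
`[g, g]`, so `dim g / [g, g] ≥ n₁ + n₂ ≥ 4`. -/

open LieModule

section LowerCentralSeries

variable {K L : Type*} [Field K] [LieRing L] [LieAlgebra K L]

lemma LieAlgebra.derivedSeries_one_eq_lowerCentralSeries_one :
    LieAlgebra.derivedSeries K L 1 = lowerCentralSeries K L L 1 := rfl

lemma LieModule.lowerCentralSeries_succ_lt [IsNilpotent L L] {k : ℕ}
    (h : lowerCentralSeries K L L k ≠ ⊥) :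
    lowerCentralSeries K L L (k + 1) < lowerCentralSeries K L L k := by
  refine (antitone_lowerCentralSeries K L L k.le_succ).lt_of_ne fun heq => h ?_
  have stable : ∀ l, lowerCentralSeries K L L (k + l) = lowerCentralSeries K L L k := by
    intro l
    induction l with
    | zero => rfl
    | succ l ih =>
      rw [← Nat.add_assoc, lowerCentralSeries_succ, ih, ← lowerCentralSeries_succ, heq]
  obtain ⟨m, hm⟩ := IsNilpotent.nilpotent K L L
  rw [← stable m, eq_bot_iff, ← hm]
  exact antitone_lowerCentralSeries K L L (Nat.le_add_left m k)

lemma LieModule.lt_finrank_lowerCentralSeries [FiniteDimensional K L] [IsNilpotent L L]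
    (j d : ℕ) (h : lowerCentralSeries K L L (j + d) ≠ ⊥) :
    d < finrank K (lowerCentralSeries K L L j).toSubmodule := by
  induction d generalizing j with
  | zero =>
    refine Submodule.one_le_finrank_iff.mpr fun hj => h ?_
    rwa [Nat.add_zero, ← LieSubmodule.toSubmodule_eq_bot]
  | succ d ih =>
    have hlt : lowerCentralSeries K L L (j + 1) < lowerCentralSeries K L L j :=
      lowerCentralSeries_succ_lt fun hj => h (eq_bot_iff.mpr
        (hj ▸ antitone_lowerCentralSeries K L L (Nat.le_add_right j _)))
    have := Submodule.finrank_lt_finrank_of_lt (show (_ : Submodule K L) < _ from hlt)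
    have := ih (j + 1) (by rwa [Nat.add_right_comm, Nat.add_assoc])
    omega

end LowerCentralSeries

lemma nilindex_le_finrank_derivedSeries_add_one (g : Type*) [LieRing g] [LieAlgebra ℂ g]
    [FiniteDimensional ℂ g] [IsNilpotent g g] :
    nilindex g ≤ finrank ℂ (LieAlgebra.derivedSeries ℂ g 1).toSubmodule + 1 := by
  rcases Nat.lt_or_ge (nilindex g) 2 with hN | hN
  · omega
  have hne : lowerCentralSeries ℂ g g (1 + (nilindex g - 2)) ≠ ⊥ :=
    Nat.notMem_of_lt_sInf (s := {k | lowerCentralSeries ℂ g g k = ⊥})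
      (by unfold nilindex at hN ⊢; omega)
  have := lt_finrank_lowerCentralSeries 1 _ hne
  rw [LieAlgebra.derivedSeries_one_eq_lowerCentralSeries_one]
  omega

lemma gdim_le_two_of_filiform (g : Type*) [LieRing g] [LieAlgebra ℂ g]
    [FiniteDimensional ℂ g] [IsNilpotent g g] (hfiliform : nilindex g + 1 = finrank ℂ g) :
    gdim g ≤ 2 := by
  have := Submodule.finrank_quotient_add_finrank (LieAlgebra.derivedSeries ℂ g 1).toSubmodule
  have := nilindex_le_finrank_derivedSeries_add_one g
  unfold gdim
  omega

lemma Module.Basis.le_finrank_quotient {K V ι : Type*} [Field K] [AddCommGroup V]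
    [Module K V] [FiniteDimensional K V] {n : ℕ} (b : Basis ι K V) {j : Fin n → ι}
    (hj : Function.Injective j) {s : Set ι} (hjs : ∀ i, j i ∉ s) {S : Submodule K V}
    (hS : S ≤ Submodule.span K (b '' s)) :
    n ≤ finrank K (V ⧸ S) := by
  have hdisj : Disjoint (Submodule.span K (Set.range (b ∘ j))) (LinearMap.ker S.mkQ) := by
    rw [S.ker_mkQ, Set.range_comp]
    refine Disjoint.mono_right hS (b.linearIndependent.disjoint_span_image ?_)
    exact Set.disjoint_left.mpr fun _ ⟨i, hi⟩ => hi ▸ hjs i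
  simpa using ((b.linearIndependent.comp j hj).map hdisj).fintype_card_le_finrank

lemma LieAlgebra.lie_mem_derivedSeries_one {R L : Type*} [CommRing R] [LieRing L]
    [LieAlgebra R L] (x y : L) : ⁅x, y⁆ ∈ derivedSeries R L 1 :=
  LieSubmodule.lie_mem_lie (LieSubmodule.mem_top x) (LieSubmodule.mem_top y)

lemma finrank_le_finrank_quotient_derivedSeries {K L M : Type*} [Field K] [LieRing L]
    [LieAlgebra K L] [FiniteDimensional K L] [AddCommGroup M] [Module K M] (f : L →ₗ[K] M)
    (hf : Function.Surjective f) (hbracket : ∀ x y : L, f ⁅x, y⁆ = 0) :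
    finrank K M ≤ finrank K (L ⧸ (LieAlgebra.derivedSeries K L 1).toSubmodule) := by
  have hker : (LieAlgebra.derivedSeries K L 1).toSubmodule ≤ LinearMap.ker f := by
    rw [LieAlgebra.derivedSeries_def, LieAlgebra.derivedSeriesOfIdeal_succ,
      LieAlgebra.derivedSeriesOfIdeal_zero, LieSubmodule.lieIdeal_oper_eq_linear_span',
      Submodule.span_le]
    rintro _ ⟨x, -, y, -, rfl⟩
    exact hbracket x y
  refine LinearMap.finrank_le_finrank_of_surjective (f := Submodule.liftQ _ f hker) ?_
  rw [← LinearMap.range_eq_top, Submodule.range_liftQ, LinearMap.range_eq_top.mpr hf]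

namespace IsProductByGenerators

variable {L g1 g2 : Type*} [LieRing L] [LieAlgebra ℂ L]
  [LieRing g1] [LieAlgebra ℂ g1] [LieRing g2] [LieAlgebra ℂ g2]

lemma n1_le_gdim (P : IsProductByGenerators L g1 g2) [FiniteDimensional ℂ g1] :
    P.n1 ≤ gdim g1 :=
  P.b1.le_finrank_quotient (Fin.castLE_injective P.n1_le)
    (s := {i | P.n1 ≤ (i : ℕ)}) (fun i => not_le.mpr i.2) P.adapted1

lemma n2_le_gdim (P : IsProductByGenerators L g1 g2) [FiniteDimensional ℂ g2] :
    P.n2 ≤ gdim g2 :=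
  P.b2.le_finrank_quotient (Fin.castLE_injective P.n2_le)
    (s := {i | P.n2 ≤ (i : ℕ)}) (fun i => not_le.mpr i.2) P.adapted2

lemma gdim_add_gdim_le (P : IsProductByGenerators L g1 g2) [FiniteDimensional ℂ L]
    [FiniteDimensional ℂ g1] [FiniteDimensional ℂ g2] : gdim g1 + gdim g2 ≤ gdim L := by
  let D1 := (LieAlgebra.derivedSeries ℂ g1 1).toSubmodule
  let D2 := (LieAlgebra.derivedSeries ℂ g2 1).toSubmodule
  let f : L →ₗ[ℂ] (g1 ⧸ D1) × (g2 ⧸ D2) :=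
    (D1.mkQ.prodMap (D2.mkQ ∘ₗ LinearMap.fst ℂ g2 _)) ∘ₗ P.e.symm.toLinearMap
  have hf : ∀ a, f (P.e a) = (D1.mkQ a.1, D2.mkQ a.2.1) := fun a => by simp [f]
  have hsurj : Function.Surjective f := by
    rintro ⟨u, v⟩
    obtain ⟨x, rfl⟩ := D1.mkQ_surjective u
    obtain ⟨y, rfl⟩ := D2.mkQ_surjective v
    exact ⟨P.e (x, y, 0), hf _⟩
  have hbracket : ∀ x y : L, f ⁅x, y⁆ = 0 := by
    intro x y
    rw [← P.e.apply_symm_apply x, ← P.e.apply_symm_apply y, P.bracket_eq, hf]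
    simp only [Submodule.mkQ_apply, Prod.mk_eq_zero, Submodule.Quotient.mk_eq_zero]
    exact ⟨LieAlgebra.lie_mem_derivedSeries_one _ _, LieAlgebra.lie_mem_derivedSeries_one _ _⟩
  simpa only [gdim, finrank_prod] using
    finrank_le_finrank_quotient_derivedSeries f hsurj hbracket

end IsProductByGenerators

/-- no filiform Lie algebra (nilpotency index = dim − 1) is a product by
generators. -/
theorem statement_5 (g : Type) [LieRing g] [LieAlgebra ℂ g]
    [FiniteDimensional ℂ g] [LieRing.IsNilpotent g]
    (hfiliform : nilindex g + 1 = finrank ℂ g) :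
    ∀ (h1 h2 : Type) [LieRing h1] [LieAlgebra ℂ h1] [LieRing h2] [LieAlgebra ℂ h2]
      [FiniteDimensional ℂ h1] [FiniteDimensional ℂ h2]
      [LieRing.IsNilpotent h1] [LieRing.IsNilpotent h2],
      LieAlgebra.Nonabelian h1 → LieAlgebra.Nonabelian h2 →
      IsProductByGenerators g h1 h2 → False := by
  intro h1 h2 _ _ _ _ _ _ _ _ _ _ P
  have hfew : gdim g ≤ 2 := gdim_le_two_of_filiform g hfiliform
  have hmany : P.n1 + P.n2 ≤ gdim g :=
    (add_le_add P.n1_le_gdim P.n2_le_gdim).trans P.gdim_add_gdim_le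
  have := P.two_le_n1
  have := P.two_le_n2
  omega
end
end

section
/- Let D be a derivation of g₁ ×̲ g₂ with components D_{ij} = pᵢ ∘ D ∘ pⱼ. Then D₁₂(g₂) ⊂ T₁ and D₂₁(g₁) ⊂ T₂, where Tᵢ = {Y ∈ gᵢ : [Y, gᵢ] ⊂ Z(gᵢ)} is the transporter of gᵢ into its center. -/
open Module

noncomputable section

/-!
For `X ∈ g₁`, `Y ∈ g₂` the bracket `[Y, X]` lies in the central summand `g₃`, and a derivation
maps the centre into itself, so `D [Y, X]` is central. Since `p₁` is a surjective Lie
homomorphism it carries the centre of `g₁ ×̲ g₂` into `Z(g₁)`, and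
`p₁ (D [Y, X]) = [D₁₂ Y, X]`. The same argument with `p₂` handles `D₂₁`.
-/

theorem LieHom.map_mem_center_of_surjective {R L L' : Type*} [CommRing R] [LieRing L]
    [LieAlgebra R L] [LieRing L'] [LieAlgebra R L'] (f : L →ₗ⁅R⁆ L')
    (hf : Function.Surjective f) {c : L} (hc : c ∈ LieAlgebra.center R L) :
    f c ∈ LieAlgebra.center R L' := by
  rw [LieModule.mem_maxTrivSubmodule] at hc ⊢
  intro y
  obtain ⟨x, rfl⟩ := hf y
  rw [← f.map_lie, hc x, map_zero]

theorem IsDerivation.apply_mem_center {L : Type*} [LieRing L] [LieAlgebra ℂ L]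
    {D : L →ₗ[ℂ] L} (hD : IsDerivation D) {c : L} (hc : c ∈ LieAlgebra.center ℂ L) :
    D c ∈ LieAlgebra.center ℂ L := by
  rw [LieModule.mem_maxTrivSubmodule] at hc ⊢
  intro z
  simpa only [hc z, hc (D z), map_zero, zero_add] using (hD z c).symm

namespace IsProductByGenerators

variable {L g1 g2 : Type*} [LieRing L] [LieAlgebra ℂ L]
  [LieRing g1] [LieAlgebra ℂ g1] [LieRing g2] [LieAlgebra ℂ g2]
  (P : IsProductByGenerators L g1 g2)

theorem symm_lie (z z' : L) :
    P.e.symm ⁅z, z'⁆ = (⁅(P.e.symm z).1, (P.e.symm z').1⁆, ⁅(P.e.symm z).2.1, (P.e.symm z').2.1⁆,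
      P.Φ (P.e.symm z).1 (P.e.symm z').2.1 - P.Φ (P.e.symm z').1 (P.e.symm z).2.1) := by
  rw [P.e.symm_apply_eq, ← P.bracket_eq, P.e.apply_symm_apply, P.e.apply_symm_apply]

def proj₁ : L →ₗ⁅ℂ⁆ g1 :=
  { (LinearMap.fst ℂ g1 _).comp P.e.symm.toLinearMap with
    map_lie' := fun {z z'} => congrArg Prod.fst (P.symm_lie z z') }

def proj₂ : L →ₗ⁅ℂ⁆ g2 :=
  { (LinearMap.fst ℂ g2 _).comp ((LinearMap.snd ℂ g1 _).comp P.e.symm.toLinearMap) with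
    map_lie' := fun {z z'} => congrArg (fun a => a.2.1) (P.symm_lie z z') }

theorem proj₁_apply (z : L) : P.proj₁ z = P.p₁ z := rfl
theorem proj₂_apply (z : L) : P.proj₂ z = P.p₂ z := rfl

theorem proj₁_ι₁ (x : g1) : P.proj₁ (P.ι₁ x) = x := by simp [proj₁_apply, p₁, ι₁]
theorem proj₁_ι₂ (y : g2) : P.proj₁ (P.ι₂ y) = 0 := by simp [proj₁_apply, p₁, ι₂]
theorem proj₂_ι₁ (x : g1) : P.proj₂ (P.ι₁ x) = 0 := by simp [proj₂_apply, p₂, ι₁]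
theorem proj₂_ι₂ (y : g2) : P.proj₂ (P.ι₂ y) = y := by simp [proj₂_apply, p₂, ι₂]

theorem proj₁_surjective : Function.Surjective P.proj₁ := fun x => ⟨P.ι₁ x, P.proj₁_ι₁ x⟩
theorem proj₂_surjective : Function.Surjective P.proj₂ := fun y => ⟨P.ι₂ y, P.proj₂_ι₂ y⟩

theorem ι₃_mem_center (v : Fin P.n1 → Fin P.n2 → ℂ) : P.ι₃ v ∈ LieAlgebra.center ℂ L := by
  rw [LieModule.mem_maxTrivSubmodule]
  intro z
  rw [← lie_skew, ι₃, ← P.e.apply_symm_apply z, P.bracket_eq]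
  simp

theorem lie_ι₁_ι₂ (x : g1) (y : g2) : ⁅P.ι₁ x, P.ι₂ y⁆ = P.ι₃ (P.Φ x y) := by
  simp [ι₁, ι₂, ι₃, P.bracket_eq]

theorem lie_ι₁_ι₂_mem_center (x : g1) (y : g2) :
    ⁅P.ι₁ x, P.ι₂ y⁆ ∈ LieAlgebra.center ℂ L :=
  P.lie_ι₁_ι₂ x y ▸ P.ι₃_mem_center _

theorem lie_ι₂_ι₁_mem_center (y : g2) (x : g1) :
    ⁅P.ι₂ y, P.ι₁ x⁆ ∈ LieAlgebra.center ℂ L := by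
  rw [← lie_skew]
  exact neg_mem (P.lie_ι₁_ι₂_mem_center x y)

variable {P} {D : L →ₗ[ℂ] L}

theorem lie_D12_eq (hD : IsDerivation D) (y : g2) (x : g1) :
    ⁅P.D12 D y, x⁆ = P.proj₁ (D ⁅P.ι₂ y, P.ι₁ x⁆) := by
  rw [hD, map_add, LieHom.map_lie, LieHom.map_lie, proj₁_ι₁, proj₁_ι₂, zero_lie, add_zero]
  rfl

theorem lie_D21_eq (hD : IsDerivation D) (x : g1) (y : g2) :
    ⁅P.D21 D x, y⁆ = P.proj₂ (D ⁅P.ι₁ x, P.ι₂ y⁆) := by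
  rw [hD, map_add, LieHom.map_lie, LieHom.map_lie, proj₂_ι₂, proj₂_ι₁, zero_lie, add_zero]
  rfl

end IsProductByGenerators

theorem statement_11_general (L g1 g2 : Type) [LieRing L] [LieAlgebra ℂ L]
    [LieRing g1] [LieAlgebra ℂ g1] [LieRing g2] [LieAlgebra ℂ g2]
    (P : IsProductByGenerators L g1 g2)
    (D : L →ₗ[ℂ] L) (hD : IsDerivation D) :
    (∀ y : g2, ∀ a : g1, ⁅P.D12 D y, a⁆ ∈ LieAlgebra.center ℂ g1) ∧
    (∀ x : g1, ∀ b : g2, ⁅P.D21 D x, b⁆ ∈ LieAlgebra.center ℂ g2) := by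
  refine ⟨fun y a => ?_, fun x b => ?_⟩
  · rw [IsProductByGenerators.lie_D12_eq hD]
    exact P.proj₁.map_mem_center_of_surjective P.proj₁_surjective
      (hD.apply_mem_center (P.lie_ι₂_ι₁_mem_center y a))
  · rw [IsProductByGenerators.lie_D21_eq hD]
    exact P.proj₂.map_mem_center_of_surjective P.proj₂_surjective
      (hD.apply_mem_center (P.lie_ι₁_ι₂_mem_center x b))

/-- for a derivation `D` of `g1 ×̲ g2`, `D₁₂(g2) ⊆ T₁` and `D₂₁(g1) ⊆ T₂`,
where `Tᵢ = {Y ∈ gᵢ | [Y, gᵢ] ⊆ Z(gᵢ)}`. -/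
theorem statement_11 (L g1 g2 : Type) [LieRing L] [LieAlgebra ℂ L]
    [LieRing g1] [LieAlgebra ℂ g1] [LieRing g2] [LieAlgebra ℂ g2]
    [FiniteDimensional ℂ g1] [FiniteDimensional ℂ g2]
    [LieRing.IsNilpotent g1] [LieRing.IsNilpotent g2]
    (P : IsProductByGenerators L g1 g2)
    (D : L →ₗ[ℂ] L) (hD : IsDerivation D) :
    (∀ y : g2, ∀ a : g1, ⁅P.D12 D y, a⁆ ∈ LieAlgebra.center ℂ g1) ∧
    (∀ x : g1, ∀ b : g2, ⁅P.D21 D x, b⁆ ∈ LieAlgebra.center ℂ g2) :=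
  statement_11_general L g1 g2 P D hD
end
end

section
/- Let D be a derivation of g₁ ×̲ g₂ with components D_{ij} = pᵢ ∘ D ∘ pⱼ, where g₁, g₂ are S-algebras. For j ∈ {1,2}, i ≠ j, j ≠ k, and any m ≥ 1, one has D_{ij} ∘ D_{jj}^m ∘ D_{jk} = 0. -/
open Module

noncomputable section

/-!
The maps `D₁₂` and `D₁₃` take values in `[g₁, g₁]`: the first by the S-property of `g₂`, applied
to the swapped product `g₂ ×̲ g₁`; the second because `g₃` lies in `[L, L]`, which the derivation
`D` preserves and which `p₁` maps into `[g₁, g₁]`. For the same reason `D₁₁` preserves `[g₁, g₁]`.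
It remains to see that `D₂₁` and `D₃₁` vanish on `[g₁, g₁]`. Apply `D` to `⁅ι₁ a, ι₁ b⁆`: the
`g₂`-component is a sum of brackets with `p₂ ι₁ = 0`, and the `g₃`-component is
`Φ(a, D₂₁ b) - Φ(b, D₂₁ a)`, which vanishes because `D₂₁` takes values in `[g₂, g₂]` (the
S-property of `g₁`) and `Φ` only pairs generators. The case `j = 2` is the case `j = 1` for
`g₂ ×̲ g₁`.
-/

namespace LieAlgebra

variable {R g M : Type*} [CommRing R] [LieRing g] [LieAlgebra R g]
  [AddCommGroup M] [Module R M]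

theorem apply_mem_of_mem_derivedSeries_one (f : g →ₗ[R] M) {N : Submodule R M}
    (h : ∀ a b : g, f ⁅a, b⁆ ∈ N) {x : g} (hx : x ∈ derivedSeries R g 1) : f x ∈ N := by
  have hspan : Submodule.span R {⁅a, b⁆ | (a : g) (b : g)} ≤ N.comap f :=
    Submodule.span_le.2 fun _ ⟨a, b, hab⟩ => hab ▸ h a b
  exact hspan (by rwa [← coe_derivedSeries_one_eq])

theorem lie_mem_derivedSeries_one_s12 (a b : g) : ⁅a, b⁆ ∈ derivedSeries R g 1 := by
  have : ⁅a, b⁆ ∈ Submodule.span R {⁅a, b⁆ | (a : g) (b : g)} :=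
    Submodule.subset_span ⟨a, b, rfl⟩
  rwa [← coe_derivedSeries_one_eq] at this

end LieAlgebra

open LieAlgebra

theorem IsDerivation.map_mem_derivedSeries_one {L : Type*} [LieRing L] [LieAlgebra ℂ L]
    {D : L →ₗ[ℂ] L} (hD : IsDerivation D) {x : L} (hx : x ∈ derivedSeries ℂ L 1) :
    D x ∈ derivedSeries ℂ L 1 :=
  apply_mem_of_mem_derivedSeries_one D (fun a b => by
    rw [hD]
    exact add_mem (lie_mem_derivedSeries_one_s12 _ _) (lie_mem_derivedSeries_one_s12 _ _)) hx

theorem Pi.mem_span_single_single {R ι κ : Type*} [Semiring R] [Fintype ι] [Fintype κ]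
    [DecidableEq ι] [DecidableEq κ] (v : ι → κ → R) :
    v ∈ Submodule.span R {w | ∃ i j, w = Pi.single i (Pi.single j (1 : R))} := by
  have hv : v = ∑ i, ∑ j, v i j • (Pi.single i (Pi.single j 1) : ι → κ → R) := by
    ext i j
    simp [Finset.sum_apply, Pi.single_apply, ite_apply]
  rw [hv]
  exact Submodule.sum_mem _ fun i _ => Submodule.sum_mem _ fun j _ =>
    Submodule.smul_mem _ _ (Submodule.subset_span ⟨i, j, rfl⟩)

def LinearEquiv.piComm (R ι κ M : Type*) [Semiring R] [AddCommMonoid M] [Module R M] :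
    (ι → κ → M) ≃ₗ[R] (κ → ι → M) where
  __ := Equiv.piComm fun _ _ => M
  map_add' _ _ := rfl
  map_smul' _ _ := rfl

@[simp] theorem LinearEquiv.piComm_apply {R ι κ M : Type*} [Semiring R] [AddCommMonoid M]
    [Module R M] (v : ι → κ → M) (j : κ) (i : ι) : LinearEquiv.piComm R ι κ M v j i = v i j :=
  rfl

theorem LinearEquiv.piComm_single_single {R ι κ M : Type*} [Semiring R] [AddCommMonoid M]
    [Module R M] [DecidableEq ι] [DecidableEq κ] (i : ι) (j : κ) (m : M) :
    LinearEquiv.piComm R ι κ M (Pi.single i (Pi.single j m)) = Pi.single j (Pi.single i m) := by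
  ext j' i'
  by_cases hi : i' = i <;> by_cases hj : j' = j <;> simp [hi, hj]

namespace IsProductByGenerators

variable {L g1 g2 : Type*} [LieRing L] [LieAlgebra ℂ L]
  [LieRing g1] [LieAlgebra ℂ g1] [LieRing g2] [LieAlgebra ℂ g2]
  (P : IsProductByGenerators L g1 g2)

def ι₁ₗ : g1 →ₗ[ℂ] L := P.e.toLinearMap ∘ₗ LinearMap.inl ℂ _ _

def ι₃ₗ : (Fin P.n1 → Fin P.n2 → ℂ) →ₗ[ℂ] L :=
  P.e.toLinearMap ∘ₗ LinearMap.inr ℂ _ _ ∘ₗ LinearMap.inr ℂ _ _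

def p₁ₗ : L →ₗ[ℂ] g1 := LinearMap.fst ℂ _ _ ∘ₗ P.e.symm.toLinearMap

def p₂ₗ : L →ₗ[ℂ] g2 :=
  LinearMap.fst ℂ _ _ ∘ₗ LinearMap.snd ℂ _ _ ∘ₗ P.e.symm.toLinearMap

def p₃ₗ : L →ₗ[ℂ] (Fin P.n1 → Fin P.n2 → ℂ) :=
  LinearMap.snd ℂ _ _ ∘ₗ LinearMap.snd ℂ _ _ ∘ₗ P.e.symm.toLinearMap

@[simp] theorem coe_ι₁ₗ : ⇑P.ι₁ₗ = P.ι₁ := rfl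
@[simp] theorem coe_ι₃ₗ : ⇑P.ι₃ₗ = P.ι₃ := rfl
@[simp] theorem coe_p₁ₗ : ⇑P.p₁ₗ = P.p₁ := rfl
@[simp] theorem coe_p₂ₗ : ⇑P.p₂ₗ = P.p₂ := rfl
@[simp] theorem coe_p₃ₗ : ⇑P.p₃ₗ = P.p₃ := rfl

@[simp] theorem p₁_ι₁ (x : g1) : P.p₁ (P.ι₁ x) = x := by simp [p₁, ι₁]
@[simp] theorem p₂_ι₁ (x : g1) : P.p₂ (P.ι₁ x) = 0 := by simp [p₂, ι₁]

theorem lie_eq (z w : L) : ⁅z, w⁆ = P.e (⁅P.p₁ z, P.p₁ w⁆, ⁅P.p₂ z, P.p₂ w⁆,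
    P.Φ (P.p₁ z) (P.p₂ w) - P.Φ (P.p₁ w) (P.p₂ z)) := by
  conv_lhs => rw [← P.e.apply_symm_apply z, ← P.e.apply_symm_apply w, P.bracket_eq]
  rfl

theorem p₁_lie (z w : L) : P.p₁ ⁅z, w⁆ = ⁅P.p₁ z, P.p₁ w⁆ := by
  rw [P.lie_eq]; simp [p₁]

theorem p₂_lie (z w : L) : P.p₂ ⁅z, w⁆ = ⁅P.p₂ z, P.p₂ w⁆ := by
  rw [P.lie_eq]; simp [p₂]

theorem p₃_lie (z w : L) :
    P.p₃ ⁅z, w⁆ = P.Φ (P.p₁ z) (P.p₂ w) - P.Φ (P.p₁ w) (P.p₂ z) := by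
  rw [P.lie_eq]; simp [p₃]

theorem ι₁_lie (x x' : g1) : P.ι₁ ⁅x, x'⁆ = ⁅P.ι₁ x, P.ι₁ x'⁆ := by
  rw [ι₁, ι₁, ι₁, P.bracket_eq]
  simp

theorem Φ_eq_zero_of_mem_derivedSeries (x : g1) {y : g2} (hy : y ∈ derivedSeries ℂ g2 1) :
    P.Φ x y = 0 := by
  have hker : Submodule.span ℂ (P.b2 '' {j | P.n2 ≤ (j : ℕ)}) ≤ LinearMap.ker P.Φ.flip := by
    rw [Submodule.span_le]
    rintro _ ⟨j, hj, rfl⟩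
    exact P.b1.ext fun i => by simp [P.hΦ, Nat.not_lt.2 hj]
  exact LinearMap.congr_fun (hker (P.adapted2 hy)) x

theorem ι₃_single_one (i : Fin P.n1) (j : Fin P.n2) :
    P.ι₃ (Pi.single i (Pi.single j 1)) =
      ⁅P.ι₁ (P.b1 ⟨i, i.2.trans_le P.n1_le⟩), P.ι₂ (P.b2 ⟨j, j.2.trans_le P.n2_le⟩)⁆ := by
  rw [ι₃, ι₁, ι₂, P.bracket_eq, P.hΦ, dif_pos ⟨i.2, j.2⟩]
  simp

theorem ι₃_mem_derivedSeries (v : Fin P.n1 → Fin P.n2 → ℂ) :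
    P.ι₃ v ∈ derivedSeries ℂ L 1 := by
  have hspan : Submodule.span ℂ {w | ∃ i j, w = Pi.single i (Pi.single j (1 : ℂ))} ≤
      (derivedSeries ℂ L 1).toSubmodule.comap P.ι₃ₗ := by
    rw [Submodule.span_le]
    rintro _ ⟨i, j, rfl⟩
    rw [SetLike.mem_coe, Submodule.mem_comap, coe_ι₃ₗ, P.ι₃_single_one]
    exact lie_mem_derivedSeries_one_s12 _ _
  exact hspan (Pi.mem_span_single_single v)

theorem ι₁_mem_derivedSeries {x : g1} (hx : x ∈ derivedSeries ℂ g1 1) :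
    P.ι₁ x ∈ derivedSeries ℂ L 1 :=
  apply_mem_of_mem_derivedSeries_one P.ι₁ₗ (fun a b => by
    simpa [P.ι₁_lie] using lie_mem_derivedSeries_one_s12 _ _) hx

theorem p₁_mem_derivedSeries {z : L} (hz : z ∈ derivedSeries ℂ L 1) :
    P.p₁ z ∈ derivedSeries ℂ g1 1 :=
  apply_mem_of_mem_derivedSeries_one P.p₁ₗ (fun a b => by
    simpa [P.p₁_lie] using lie_mem_derivedSeries_one_s12 _ _) hz


-- The sign is forced by `bracket_eq`: exchanging the factors transposes the cocycle and
-- reverses the antisymmetric combination in which it enters the bracket.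
def swapCenter : (Fin P.n2 → Fin P.n1 → ℂ) ≃ₗ[ℂ] (Fin P.n1 → Fin P.n2 → ℂ) :=
  LinearEquiv.piComm ℂ _ _ ℂ ≪≫ₗ LinearEquiv.neg ℂ

def swapEquiv : (g2 × g1 × (Fin P.n2 → Fin P.n1 → ℂ)) ≃ₗ[ℂ]
    (g1 × g2 × (Fin P.n1 → Fin P.n2 → ℂ)) :=
  (LinearEquiv.prodAssoc ℂ g2 g1 _).symm ≪≫ₗ
    (LinearEquiv.prodComm ℂ g2 g1).prodCongr P.swapCenter ≪≫ₗ LinearEquiv.prodAssoc ℂ g1 g2 _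

theorem swapEquiv_apply (a : g2 × g1 × (Fin P.n2 → Fin P.n1 → ℂ)) :
    P.swapEquiv a = (a.2.1, a.1, P.swapCenter a.2.2) := rfl

def swap : IsProductByGenerators L g2 g1 where
  m1 := P.m2
  m2 := P.m1
  n1 := P.n2
  n2 := P.n1
  two_le_n1 := P.two_le_n2
  two_le_n2 := P.two_le_n1
  n1_le := P.n2_le
  n2_le := P.n1_le
  b1 := P.b2
  b2 := P.b1
  gen1 := P.gen2
  gen2 := P.gen1
  adapted1 := P.adapted2
  adapted2 := P.adapted1
  Φ := (P.Φ.compr₂ (LinearEquiv.piComm ℂ _ _ ℂ).toLinearMap).flip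
  hΦ j i := by
    simp only [LinearMap.flip_apply, LinearMap.compr₂_apply, LinearEquiv.coe_coe, P.hΦ]
    split_ifs <;> simp_all [LinearEquiv.piComm_single_single]
  e := P.swapEquiv ≪≫ₗ P.e
  bracket_eq a a' := by
    simp only [LinearEquiv.trans_apply, swapEquiv_apply, P.bracket_eq]
    congr 3
    ext i j
    simp [swapCenter]

theorem swap_ι₁ (y : g2) : P.swap.ι₁ y = P.ι₂ y :=
  congrArg P.e (Prod.ext rfl (Prod.ext rfl (map_zero P.swapCenter)))

theorem swap_ι₂ (x : g1) : P.swap.ι₂ x = P.ι₁ x :=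
  congrArg P.e (Prod.ext rfl (Prod.ext rfl (map_zero P.swapCenter)))

theorem swap_ι₃ (w : Fin P.n2 → Fin P.n1 → ℂ) : P.swap.ι₃ w = P.ι₃ (P.swapCenter w) := rfl

theorem swap_p₁ (z : L) : P.swap.p₁ z = P.p₂ z := rfl

theorem swap_p₂ (z : L) : P.swap.p₂ z = P.p₁ z := rfl

theorem swap_p₃ (z : L) : P.swap.p₃ z = P.swapCenter.symm (P.p₃ z) := rfl

section

variable (D : L →ₗ[ℂ] L)

@[simp] theorem swap_D11 : P.swap.D11 D = P.D22 D := by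
  ext y; simp only [D11, D22, swap_ι₁, swap_p₁]

@[simp] theorem swap_D12 : P.swap.D12 D = P.D21 D := by
  ext x; simp only [D12, D21, swap_ι₂, swap_p₁]

@[simp] theorem swap_D21 : P.swap.D21 D = P.D12 D := by
  ext y; simp only [D21, D12, swap_ι₁, swap_p₂]

@[simp] theorem swap_D13_swapCenter_symm (v : Fin P.n1 → Fin P.n2 → ℂ) :
    P.swap.D13 D (P.swapCenter.symm v) = P.D23 D v := by
  simp only [D13, D23, swap_ι₃, swap_p₁, LinearEquiv.apply_symm_apply]

@[simp] theorem swap_D31_eq_zero_iff (y : g2) : P.swap.D31 D y = 0 ↔ P.D32 D y = 0 := by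
  rw [D31, swap_ι₁, swap_p₃]
  exact P.swapCenter.symm.map_eq_zero_iff

end

variable {P} {D : L →ₗ[ℂ] L}

theorem D11_mem_derivedSeries (hD : IsDerivation D) {x : g1} (hx : x ∈ derivedSeries ℂ g1 1) :
    P.D11 D x ∈ derivedSeries ℂ g1 1 :=
  P.p₁_mem_derivedSeries (hD.map_mem_derivedSeries_one (P.ι₁_mem_derivedSeries hx))

theorem D11_iterate_mem_derivedSeries (hD : IsDerivation D) (m : ℕ) {x : g1}
    (hx : x ∈ derivedSeries ℂ g1 1) : (P.D11 D)^[m] x ∈ derivedSeries ℂ g1 1 := by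
  induction m with
  | zero => exact hx
  | succ k ih => exact Function.iterate_succ_apply' .. ▸ D11_mem_derivedSeries hD ih

theorem D13_mem_derivedSeries (hD : IsDerivation D) (v : Fin P.n1 → Fin P.n2 → ℂ) :
    P.D13 D v ∈ derivedSeries ℂ g1 1 :=
  P.p₁_mem_derivedSeries (hD.map_mem_derivedSeries_one (P.ι₃_mem_derivedSeries v))

theorem D21_eq_zero_of_mem_derivedSeries (hD : IsDerivation D) {x : g1}
    (hx : x ∈ derivedSeries ℂ g1 1) : P.D21 D x = 0 :=
  apply_mem_of_mem_derivedSeries_one (N := ⊥) (P.p₂ₗ ∘ₗ D ∘ₗ P.ι₁ₗ) (fun a b => by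
    rw [Submodule.mem_bot, LinearMap.comp_apply, LinearMap.comp_apply, coe_ι₁ₗ, P.ι₁_lie, hD,
      map_add, coe_p₂ₗ, P.p₂_lie, P.p₂_lie, p₂_ι₁, p₂_ι₁, lie_zero, zero_lie, add_zero]) hx

theorem D31_eq_zero_of_mem_derivedSeries (hD : IsDerivation D)
    (h21 : ∀ x : g1, P.D21 D x ∈ derivedSeries ℂ g2 1) {x : g1}
    (hx : x ∈ derivedSeries ℂ g1 1) : P.D31 D x = 0 :=
  apply_mem_of_mem_derivedSeries_one (N := ⊥) (P.p₃ₗ ∘ₗ D ∘ₗ P.ι₁ₗ) (fun a b => by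
    have ha : P.p₂ (D (P.ι₁ a)) ∈ derivedSeries ℂ g2 1 := h21 a
    have hb : P.p₂ (D (P.ι₁ b)) ∈ derivedSeries ℂ g2 1 := h21 b
    rw [Submodule.mem_bot, LinearMap.comp_apply, LinearMap.comp_apply, coe_ι₁ₗ, P.ι₁_lie, hD,
      map_add, coe_p₃ₗ, P.p₃_lie, P.p₃_lie, p₁_ι₁, p₂_ι₁, p₁_ι₁, p₂_ι₁,
      map_zero, P.Φ_eq_zero_of_mem_derivedSeries b ha, P.Φ_eq_zero_of_mem_derivedSeries a hb]
    simp) hx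

theorem comp_D11_iterate_comp_eq_zero (hD : IsDerivation D)
    (h21 : ∀ x : g1, P.D21 D x ∈ derivedSeries ℂ g2 1)
    (h12 : ∀ y : g2, P.D12 D y ∈ derivedSeries ℂ g1 1) (m : ℕ) :
    (∀ y : g2, P.D21 D ((P.D11 D)^[m] (P.D12 D y)) = 0) ∧
    (∀ v : Fin P.n1 → Fin P.n2 → ℂ, P.D21 D ((P.D11 D)^[m] (P.D13 D v)) = 0) ∧
    (∀ y : g2, P.D31 D ((P.D11 D)^[m] (P.D12 D y)) = 0) ∧
    (∀ v : Fin P.n1 → Fin P.n2 → ℂ, P.D31 D ((P.D11 D)^[m] (P.D13 D v)) = 0) :=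
  ⟨fun y => D21_eq_zero_of_mem_derivedSeries hD (D11_iterate_mem_derivedSeries hD m (h12 y)),
    fun v => D21_eq_zero_of_mem_derivedSeries hD
      (D11_iterate_mem_derivedSeries hD m (D13_mem_derivedSeries hD v)),
    fun y => D31_eq_zero_of_mem_derivedSeries hD h21
      (D11_iterate_mem_derivedSeries hD m (h12 y)),
    fun v => D31_eq_zero_of_mem_derivedSeries hD h21
      (D11_iterate_mem_derivedSeries hD m (D13_mem_derivedSeries hD v))⟩

end IsProductByGenerators

open IsProductByGenerators

theorem statement_12_general (L g1 g2 : Type) [LieRing L] [LieAlgebra ℂ L]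
    [LieRing g1] [LieAlgebra ℂ g1] [LieRing g2] [LieAlgebra ℂ g2]
    (hS1 : IsSAlgebra g1) (hS2 : IsSAlgebra g2)
    (P : IsProductByGenerators L g1 g2)
    (D : L →ₗ[ℂ] L) (hD : IsDerivation D) :
    ∀ m : ℕ, 1 ≤ m →
      -- j = 1 (i, k ∈ {2,3})
      (∀ y : g2, P.D21 D ((P.D11 D)^[m] (P.D12 D y)) = 0) ∧
      (∀ v : Fin P.n1 → Fin P.n2 → ℂ, P.D21 D ((P.D11 D)^[m] (P.D13 D v)) = 0) ∧
      (∀ y : g2, P.D31 D ((P.D11 D)^[m] (P.D12 D y)) = 0) ∧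
      (∀ v : Fin P.n1 → Fin P.n2 → ℂ, P.D31 D ((P.D11 D)^[m] (P.D13 D v)) = 0) ∧
      -- j = 2 (i, k ∈ {1,3})
      (∀ x : g1, P.D12 D ((P.D22 D)^[m] (P.D21 D x)) = 0) ∧
      (∀ v : Fin P.n1 → Fin P.n2 → ℂ, P.D12 D ((P.D22 D)^[m] (P.D23 D v)) = 0) ∧
      (∀ x : g1, P.D32 D ((P.D22 D)^[m] (P.D21 D x)) = 0) ∧
      (∀ v : Fin P.n1 → Fin P.n2 → ℂ, P.D32 D ((P.D22 D)^[m] (P.D23 D v)) = 0) := by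
  intro m _
  have h21 : ∀ x : g1, P.D21 D x ∈ derivedSeries ℂ g2 1 := hS1 g2 L _ _ _ _ P D hD
  have h12 : ∀ y : g2, P.D12 D y ∈ derivedSeries ℂ g1 1 := by
    simpa only [swap_D21] using hS2 g1 L _ _ _ _ P.swap D hD
  obtain ⟨h1, h2, h3, h4⟩ := P.comp_D11_iterate_comp_eq_zero hD h21 h12 m
  obtain ⟨h5, h6, h7, h8⟩ := P.swap.comp_D11_iterate_comp_eq_zero hD
    (by simpa only [swap_D21] using h12)
    (by simpa only [swap_D12] using h21) m
  simp only [swap_D11, swap_D12, swap_D21, swap_D31_eq_zero_iff] at h5 h6 h7 h8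
  refine ⟨h1, h2, h3, h4, h5, fun v => ?_, h7, fun v => ?_⟩
  · simpa only [swap_D13_swapCenter_symm] using h6 (P.swapCenter.symm v)
  · simpa only [swap_D13_swapCenter_symm] using h8 (P.swapCenter.symm v)

/-- for S-algebras `g1`, `g2` and a derivation `D` of `g1 ×̲ g2`,
`D_{ij} ∘ D_{jj}^m ∘ D_{jk} = 0` for `j ∈ {1,2}`, `i ≠ j`, `j ≠ k`, `m ≥ 1`. -/
theorem statement_12 (L g1 g2 : Type) [LieRing L] [LieAlgebra ℂ L]
    [LieRing g1] [LieAlgebra ℂ g1] [LieRing g2] [LieAlgebra ℂ g2]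
    [FiniteDimensional ℂ g1] [FiniteDimensional ℂ g2]
    [LieRing.IsNilpotent g1] [LieRing.IsNilpotent g2]
    (hS1 : IsSAlgebra g1) (hS2 : IsSAlgebra g2)
    (P : IsProductByGenerators L g1 g2)
    (D : L →ₗ[ℂ] L) (hD : IsDerivation D) :
    ∀ m : ℕ, 1 ≤ m →
      -- j = 1 (i, k ∈ {2,3})
      (∀ y : g2, P.D21 D ((P.D11 D)^[m] (P.D12 D y)) = 0) ∧
      (∀ v : Fin P.n1 → Fin P.n2 → ℂ, P.D21 D ((P.D11 D)^[m] (P.D13 D v)) = 0) ∧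
      (∀ y : g2, P.D31 D ((P.D11 D)^[m] (P.D12 D y)) = 0) ∧
      (∀ v : Fin P.n1 → Fin P.n2 → ℂ, P.D31 D ((P.D11 D)^[m] (P.D13 D v)) = 0) ∧
      -- j = 2 (i, k ∈ {1,3})
      (∀ x : g1, P.D12 D ((P.D22 D)^[m] (P.D21 D x)) = 0) ∧
      (∀ v : Fin P.n1 → Fin P.n2 → ℂ, P.D12 D ((P.D22 D)^[m] (P.D23 D v)) = 0) ∧
      (∀ x : g1, P.D32 D ((P.D22 D)^[m] (P.D21 D x)) = 0) ∧
      (∀ v : Fin P.n1 → Fin P.n2 → ℂ, P.D32 D ((P.D22 D)^[m] (P.D23 D v)) = 0) :=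
  statement_12_general L g1 g2 hS1 hS2 P D hD
end
end
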